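/- arXiv:1402.0070 — 3 statements merged into one kernel-verified Lean document; each statement's English description precedes it below -/
import Mathlib

section
/- Let L = [[a,b],[c,d]] ∈ M₂(ℤ) with ad - bc = -1 and |a+d| ≥ 1. Then there is no integer matrix A of the form [[α,β],[γ,-α]] with α ≠ 0, β ≠ 0, βγ = 1 - α², satisfying A·L = L⁻¹·A. -/
theorem orientation_reversing_no_type3_involution
    (a b c d : ℤ) (hdet : a * d - b * c = -1) (htr : |a + d| ≥ 1) :
    ¬ ∃ α β γ : ℤ, α ≠ 0 ∧ β ≠ 0 ∧ β * γ = 1 - α ^ 2 ∧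
      !![α, β; γ, -α] * !![a, b; c, d] =
        !![-d, b; c, -a] * !![α, β; γ, -α] := by
  rintro ⟨α, β, γ, hα, hβ, h1, hM⟩
  have h00 := congrArg (fun M => M 0 0) hM
  have h01 := congrArg (fun M => M 0 1) hM
  have h10 := congrArg (fun M => M 1 0) hM
  simp [Matrix.mul_apply, Fin.sum_univ_two] at h00 h01 h10
  have e1 : b * α = -(d * β) := by linarith
  have e2 : a * γ = c * α := by linarith
  have p1 : α * (α * a + β * c) = α * (-(d * α) + b * γ) := by rw [h00]
  have q1 : γ * (b * α) = γ * (-(d * β)) := by rw [e1]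
  have q2 : β * (a * γ) = β * (c * α) := by rw [e2]
  have q3 : a * (β * γ) = a * (1 - α ^ 2) := by rw [h1]
  have q4 : d * (β * γ) = d * (1 - α ^ 2) := by rw [h1]
  have key : a + d = 0 := by linarith
  rw [key] at htr
  simp at htr
end

section
/- Let L = [[a,b],[c,d]] ∈ M₂(ℤ) with ad - bc = -1 and b ≠ 0, c ≠ 0, a+d ≠ 0. Then there is no matrix A ∈ M₂(ℤ) with A² = Id and A ≠ ±Id such that A·L·A = L⁻¹ (equivalently A·L = L⁻¹·A). That is, an orientation-reversing linear Anosov matrix admits no non-trivial linear integer involution reversing it. -/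
theorem orientation_reversing_no_involution
    (a b c d : ℤ) (hdet : a * d - b * c = -1)
    (hb : b ≠ 0) (hc : c ≠ 0) (htr : a + d ≠ 0) :
    ¬ ∃ A : Matrix (Fin 2) (Fin 2) ℤ, A * A = 1 ∧ A ≠ 1 ∧ A ≠ -1 ∧
      A * !![a, b; c, d] = !![-d, b; c, -a] * A := by
  rintro ⟨A, hA2, -, -, hrev⟩
  have h : A * !![a, b; c, d] * A = !![-d, b; c, -a] := by
    rw [hrev, Matrix.mul_assoc, hA2, Matrix.mul_one]
  have ht : Matrix.trace (A * !![a, b; c, d] * A) =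
      Matrix.trace (!![(-d : ℤ), b; c, -a]) := by rw [h]
  rw [Matrix.trace_mul_comm (A * !![a, b; c, d]) A, ← Matrix.mul_assoc, hA2,
    Matrix.one_mul] at ht
  simp [Matrix.trace_fin_two] at ht
  omega
end

section
/- For A = [[1,0],[γ,-1]] with γ ∈ ℤ, γ ≠ 0, the matrix L = [[γ, 1],[2γ² - 1, 2γ]] satisfies: det L = 1, (tr L)² > 4, and A·L = L⁻¹·A. Hence every such involution reverses some hyperbolic element of SL(2,ℤ). -/
theorem type1_involution_reverses_anosov (γ : ℤ) (hγ : γ ≠ 0) :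
    (!![γ, 1; 2 * γ ^ 2 - 1, 2 * γ] : Matrix (Fin 2) (Fin 2) ℤ).det = 1 ∧
    ((!![γ, 1; 2 * γ ^ 2 - 1, 2 * γ] : Matrix (Fin 2) (Fin 2) ℤ).trace) ^ 2 > 4 ∧
    !![1, 0; γ, -1] * !![γ, 1; 2 * γ ^ 2 - 1, 2 * γ] =
      !![2 * γ, -1; -(2 * γ ^ 2 - 1), γ] * !![(1 : ℤ), 0; γ, -1] := by
  refine ⟨by simp [Matrix.det_fin_two_of]; ring, ?_, ?_⟩
  · have h1 : 1 ≤ γ ^ 2 := by nlinarith [sq_nonneg γ, Int.one_le_abs hγ, sq_abs γ]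
    simp [Matrix.trace_fin_two_of]
    nlinarith
  · ext i j
    fin_cases i <;> fin_cases j <;>
      simp [Matrix.mul_apply, Fin.sum_univ_two] <;> ring
end
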